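/- For n odd, the involution M* = Jₙ Mᵀ Jₙᵀ applied to a Suslin matrix satisfies S_{n-1}(v,w)* = S_{n-1}(v,w); for n even, S_{n-1}(v,w)* = conj(S_{n-1}(v,w)). -/
import Mathlib


open Matrix

variable {R : Type*} [CommRing R]

/-- Equivalence identifying `Fin (2^n) ⊕ Fin (2^n)` with `Fin (2^(n+1))`. -/
def blockEquiv (n : ℕ) : Fin (2^n) ⊕ Fin (2^n) ≃ Fin (2^(n+1)) :=
  finSumFinEquiv.trans (finCongr (by rw [pow_succ, mul_two]))

/-- Build a `2^(n+1) × 2^(n+1)` matrix from four `2^n × 2^n` blocks. -/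
def blocks {n : ℕ} (A B C D : Matrix (Fin (2^n)) (Fin (2^n)) R) :
    Matrix (Fin (2^(n+1))) (Fin (2^(n+1))) R :=
  Matrix.reindex (blockEquiv n) (blockEquiv n) (Matrix.fromBlocks A B C D)

/-- The pair (Suslin matrix, Suslin conjugate) of vectors `v, w : Fin (n+1) → R`,
defined recursively: `S(v,w) = [[a₁, S(v',w')],[-conj S(v',w'), b₁]]`,
`conj S(v,w) = [[b₁, -S(v',w')],[conj S(v',w'), a₁]]`. -/
def suslinPair : (n : ℕ) → (Fin (n+1) → R) → (Fin (n+1) → R) →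
    (Matrix (Fin (2^n)) (Fin (2^n)) R) × (Matrix (Fin (2^n)) (Fin (2^n)) R)
  | 0, v, w => (Matrix.of fun _ _ => v 0, Matrix.of fun _ _ => w 0)
  | n+1, v, w =>
      let P := suslinPair n (Fin.tail v) (Fin.tail w)
      (blocks (v 0 • (1 : Matrix (Fin (2^n)) (Fin (2^n)) R)) P.1 (-P.2) (w 0 • 1),
       blocks (w 0 • (1 : Matrix (Fin (2^n)) (Fin (2^n)) R)) (-P.1) P.2 (v 0 • 1))

/-- The Suslin matrix `S_{n}(v,w)` of `v, w : Fin (n+1) → R`. -/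
def suslinS {n : ℕ} (v w : Fin (n+1) → R) : Matrix (Fin (2^n)) (Fin (2^n)) R :=
  (suslinPair n v w).1

/-- The Suslin conjugate `conj (S_{n}(v,w))`. -/
def suslinConj {n : ℕ} (v w : Fin (n+1) → R) : Matrix (Fin (2^n)) (Fin (2^n)) R :=
  (suslinPair n v w).2

/-- The matrices Jₙ: J₀ = 1, Jₙ = diag(J_{n-1}, -J_{n-1}) for n even,
Jₙ = [[0, J_{n-1}],[-J_{n-1}, 0]] for n odd. -/
def Jmat (R : Type*) [CommRing R] : (n : ℕ) → Matrix (Fin (2^n)) (Fin (2^n)) R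
  | 0 => 1
  | n+1 =>
      if (n+1) % 2 = 0 then blocks (Jmat R n) 0 0 (-(Jmat R n))
      else blocks 0 (Jmat R n) (-(Jmat R n)) 0


private lemma blocks_mul {n : ℕ} (A B C D A' B' C' D' : Matrix (Fin (2^n)) (Fin (2^n)) R) :
    blocks A B C D * blocks A' B' C' D' =
      blocks (A*A'+B*C') (A*B'+B*D') (C*A'+D*C') (C*B'+D*D') := by
  simp [blocks, Matrix.reindex_apply, Matrix.submatrix_mul_equiv, Matrix.fromBlocks_multiply]

private lemma blocks_transpose {n : ℕ} (A B C D : Matrix (Fin (2^n)) (Fin (2^n)) R) :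
    (blocks A B C D)ᵀ = blocks Aᵀ Cᵀ Bᵀ Dᵀ := by
  simp [blocks, Matrix.transpose_reindex, Matrix.fromBlocks_transpose]

private lemma blocks_one {n : ℕ} :
    (blocks 1 0 0 1 : Matrix (Fin (2^(n+1))) (Fin (2^(n+1))) R) = 1 := by
  simp [blocks, Matrix.fromBlocks_one, Matrix.reindex_apply, Matrix.submatrix_one_equiv]

private lemma Jmat_mul_transpose (n : ℕ) : Jmat R n * (Jmat R n)ᵀ = 1 := by
  induction n with
  | zero => simp [Jmat]
  | succ n ih =>
    rw [Jmat]
    split <;>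
      simp [blocks_transpose, blocks_mul, ih, Matrix.neg_mul, Matrix.mul_neg, blocks_one]

private lemma suslinS_succ {n : ℕ} (v w : Fin (n+2) → R) :
    suslinS v w = blocks (v 0 • 1) (suslinS (Fin.tail v) (Fin.tail w))
      (-(suslinConj (Fin.tail v) (Fin.tail w))) (w 0 • 1) := rfl

private lemma suslinConj_succ {n : ℕ} (v w : Fin (n+2) → R) :
    suslinConj v w = blocks (w 0 • 1) (-(suslinS (Fin.tail v) (Fin.tail w)))
      (suslinConj (Fin.tail v) (Fin.tail w)) (v 0 • 1) := rfl

private lemma suslin_key (m : ℕ) (v w : Fin (m+1) → R) :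
    (Odd (m+1) → Jmat R m * (suslinS v w)ᵀ * (Jmat R m)ᵀ = suslinS v w ∧
                 Jmat R m * (suslinConj v w)ᵀ * (Jmat R m)ᵀ = suslinConj v w) ∧
    (Even (m+1) → Jmat R m * (suslinS v w)ᵀ * (Jmat R m)ᵀ = suslinConj v w ∧
                 Jmat R m * (suslinConj v w)ᵀ * (Jmat R m)ᵀ = suslinS v w) := by
  induction m with
  | zero =>
    refine ⟨fun _ => ⟨?_, ?_⟩, fun h => absurd h (by decide)⟩ <;>
    · ext i j
      simp [Jmat, suslinS, suslinConj, suslinPair, Matrix.transpose_apply]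
  | succ n ih =>
    have hJ := Jmat_mul_transpose (R := R) n
    rcases Nat.even_or_odd (n+1) with he | ho
    · -- n+1 even, so n+2 odd
      have h2 : (n+1) % 2 = 0 := Nat.even_iff.mp he
      have h1 := (ih (Fin.tail v) (Fin.tail w)).2 he
      refine ⟨fun _ => ⟨?_, ?_⟩, fun h => by
        exfalso; rw [Nat.even_iff] at he h; omega⟩ <;>
      · simp only [suslinS_succ, suslinConj_succ]
        rw [Jmat, if_pos h2, blocks_transpose, blocks_transpose, blocks_mul, blocks_mul]
        simp [Matrix.mul_neg, Matrix.neg_mul, smul_mul_assoc, mul_smul_comm,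
          hJ, h1.1, h1.2, neg_neg]
    · -- n+1 odd, so n+2 even
      have h2 : ¬ (n+1) % 2 = 0 := by
        rw [Nat.odd_iff] at ho; omega
      have h1 := (ih (Fin.tail v) (Fin.tail w)).1 ho
      refine ⟨fun h => by
        exfalso; rw [Nat.odd_iff] at ho h; omega, fun _ => ⟨?_, ?_⟩⟩ <;>
      · simp only [suslinS_succ, suslinConj_succ]
        rw [Jmat, if_neg h2, blocks_transpose, blocks_transpose, blocks_mul, blocks_mul]
        simp [Matrix.mul_neg, Matrix.neg_mul, smul_mul_assoc, mul_smul_comm,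
          hJ, h1.1, h1.2, neg_neg]

/-- with M* = J Mᵀ Jᵀ (using J_{n-1} for S_{n-1}, i.e. Jmat m for
vectors of length m+1): if the length m+1 is odd then S* = S, and if it is even
then S* = conj S. -/
theorem suslin_involution {m : ℕ} (v w : Fin (m+1) → R) :
    (Odd (m+1) → Jmat R m * (suslinS v w)ᵀ * (Jmat R m)ᵀ = suslinS v w) ∧
    (Even (m+1) → Jmat R m * (suslinS v w)ᵀ * (Jmat R m)ᵀ = suslinConj v w) := by
  have h := suslin_key m v w
  exact ⟨fun ho => (h.1 ho).1, fun he => (h.2 he).1⟩
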